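/- The Borden bound: A_M(n,d,2) ≤ d · A_H(n, 2d−1, 2), i.e., any binary code with pairwise Max-distance at least d has size at most d times the maximum size of a binary code of length n with minimum Hamming distance 2d−1. -/

import Mathlib

/-!
Since `wt x + L(x,y) = wt y + L(y,x)`, the difference `L(x,y) - L(y,x)` equals `wt y - wt x`.
Sort the code into `d` classes by `⌊wt x / 2⌋ mod d`. Within a class the weights either differ by
at most `1`, and then the smaller of `L(x,y), L(y,x)` is at least `d - 1`, or they differ by at
least `2d - 1`, and then so does the larger one. Either way the Hamming distance is at least
`2d - 1`, so each class is a code of minimum Hamming distance `2d - 1`.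
-/

/-- `L(x,y) = |{i : x_i < y_i}|` for binary words. -/
def Lcnt {n : ℕ} (x y : Fin n → Fin 2) : ℕ :=
  (Finset.univ.filter fun i => x i < y i).card

open Finset

theorem Finset.card_le_card_mul_sSup_of_fiberwise {α β : Type*} [Fintype α] [DecidableEq β]
    (Q : α → α → Prop) {C : Finset α} {t : Finset β} (f : α → β) (hf : ∀ x ∈ C, f x ∈ t)
    (hQ : ∀ x ∈ C, ∀ y ∈ C, x ≠ y → f x = f y → Q x y) :
    #C ≤ #t * sSup {m | ∃ D : Finset α, (∀ x ∈ D, ∀ y ∈ D, x ≠ y → Q x y) ∧ m = #D} := by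
  have hbdd : BddAbove {m | ∃ D : Finset α, (∀ x ∈ D, ∀ y ∈ D, x ≠ y → Q x y) ∧ m = #D} :=
    ⟨Fintype.card α, by rintro _ ⟨D, -, rfl⟩; exact card_le_univ D⟩
  rw [mul_comm]
  refine card_le_mul_card_image_of_maps_to hf _ fun b _ => le_csSup hbdd ⟨_, ?_, rfl⟩
  intro x hx y hy hxy
  rw [mem_filter] at hx hy
  exact hQ x hx.1 y hy.1 hxy (hx.2.trans hy.2.symm)

theorem Nat.le_succ_or_add_two_mul_sub_one_le_of_div_two_modEq {u v d : ℕ} (huv : u ≤ v)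
    (h : u / 2 ≡ v / 2 [MOD d]) : v ≤ u + 1 ∨ u + (2 * d - 1) ≤ v := by
  have hdvd := (Nat.modEq_iff_dvd' (Nat.div_le_div_right huv)).mp h
  rcases Nat.eq_zero_or_pos (v / 2 - u / 2) with hq | hq
  · left; omega
  · have := Nat.le_of_dvd hq hdvd
    right; omega

theorem hammingNorm_eq_card_add_Lcnt {n : ℕ} (x y : Fin n → Fin 2) :
    hammingNorm x = #{i | x i ≠ 0 ∧ y i ≠ 0} + Lcnt y x := by
  rw [hammingNorm, ← card_filter_add_card_filter_not (fun i => y i ≠ 0), filter_filter,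
    filter_filter, Lcnt]
  congr 2
  refine filter_congr fun i _ => ?_
  generalize x i = a, y i = b
  revert a b
  decide

theorem hammingNorm_add_Lcnt_comm {n : ℕ} (x y : Fin n → Fin 2) :
    hammingNorm x + Lcnt x y = hammingNorm y + Lcnt y x := by
  rw [hammingNorm_eq_card_add_Lcnt x y, hammingNorm_eq_card_add_Lcnt y x]
  simp only [and_comm]
  omega

theorem two_mul_sub_one_le_Lcnt_add_Lcnt {n d : ℕ} {x y : Fin n → Fin 2}
    (hmax : d ≤ max (Lcnt x y) (Lcnt y x)) (h : hammingNorm x / 2 ≡ hammingNorm y / 2 [MOD d]) :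
    2 * d - 1 ≤ Lcnt x y + Lcnt y x := by
  wlog hle : Lcnt y x ≤ Lcnt x y generalizing x y
  · rw [add_comm]
    exact this (by rwa [max_comm]) h.symm (by omega)
  have hw := hammingNorm_add_Lcnt_comm x y
  rcases Nat.le_succ_or_add_two_mul_sub_one_le_of_div_two_modEq (by omega) h with h | h <;> omega

/-- Borden bound: `A_M(n,d,2) ≤ d · A_H(n, 2d−1, 2)`: any binary
code with pairwise Max-distance at least `d ≥ 1` has size at most `d` times the
maximum size of a binary code of length `n` with minimum Hamming distance `2d−1`. -/
theorem stmt15 (n d : ℕ) (hd : 1 ≤ d) :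
    sSup {m : ℕ | ∃ C : Finset (Fin n → Fin 2),
        (∀ x ∈ C, ∀ y ∈ C, x ≠ y → d ≤ max (Lcnt x y) (Lcnt y x)) ∧
        m = C.card} ≤
      d * sSup {m : ℕ | ∃ C : Finset (Fin n → Fin 2),
        (∀ x ∈ C, ∀ y ∈ C, x ≠ y → 2 * d - 1 ≤ Lcnt x y + Lcnt y x) ∧
        m = C.card} := by
  refine csSup_le ⟨0, ∅, by simp, rfl⟩ ?_
  rintro _ ⟨C, hC, rfl⟩
  have hclass : ∀ x ∈ C, hammingNorm x / 2 % d ∈ range d :=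
    fun x _ => mem_range.2 (Nat.mod_lt _ hd)
  simpa using card_le_card_mul_sSup_of_fiberwise _ _ hclass
    fun x hx y hy hxy h => two_mul_sub_one_le_Lcnt_add_Lcnt (hC x hx y hy hxy) h
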